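/- arXiv:1006.4238 — 4 statements merged into one kernel-verified Lean document; each statement's English description precedes it below -/
import Mathlib

section
/- Let rho(r) = (1/2)(|r+1|^{1/3} + |r-1|^{1/3} - 2|r|^{1/3}). Then kappa^2 := 6 * sum over r in Z of rho(r)^3 is finite and strictly positive. -/
set_option maxHeartbeats 1000000

open Real

/-- The sequence `ρ` from the paper. -/
noncomputable def rho (r : ℤ) : ℝ :=
  (1/2) * (|(r:ℝ) + 1| ^ ((1:ℝ)/3) + |(r:ℝ) - 1| ^ ((1:ℝ)/3) - 2 * |(r:ℝ)| ^ ((1:ℝ)/3))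

lemma cube_rpow (y : ℝ) (hy : 0 ≤ y) : (y ^ ((1:ℝ)/3)) ^ (3:ℕ) = y := by
  rw [← Real.rpow_natCast (y ^ ((1:ℝ)/3)) 3, ← Real.rpow_mul hy]
  norm_num

lemma rho_neg (r : ℤ) : rho (-r) = rho r := by
  unfold rho
  push_cast
  rw [show (-(r:ℝ)) + 1 = -((r:ℝ) - 1) by ring, show (-(r:ℝ)) - 1 = -((r:ℝ) + 1) by ring,
    abs_neg, abs_neg, abs_neg]
  ring

lemma rho_zero : rho 0 = 1 := by
  unfold rho; norm_num

lemma rho_one_abs : |rho 1| ≤ 1/2 := by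
  have h1 : (1:ℝ) ≤ (2:ℝ) ^ ((1:ℝ)/3) := by
    calc (1:ℝ) = (1:ℝ) ^ ((1:ℝ)/3) := (Real.one_rpow _).symm
    _ ≤ (2:ℝ) ^ ((1:ℝ)/3) := Real.rpow_le_rpow (by norm_num) (by norm_num) (by norm_num)
  have h2 : (2:ℝ) ^ ((1:ℝ)/3) ≤ 2 := by
    calc (2:ℝ) ^ ((1:ℝ)/3) ≤ (2:ℝ) ^ ((1:ℝ)) :=
      Real.rpow_le_rpow_of_exponent_le (by norm_num) (by norm_num)
    _ = 2 := Real.rpow_one 2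
  have hrho : rho 1 = (1/2) * ((2:ℝ) ^ ((1:ℝ)/3) - 2) := by
    unfold rho; norm_num
  rw [hrho, abs_le]
  constructor <;> nlinarith

lemma rho_cube_bound (r : ℤ) (hr : 2 ≤ r) : |rho r| ^ (3:ℕ) ≤ (1/8) * (1 / ((r:ℝ) - 1)^2) := by
  have hx : (2:ℝ) ≤ (r:ℝ) := by exact_mod_cast hr
  set x := (r:ℝ) with hxdef
  set a := (x+1) ^ ((1:ℝ)/3) with ha
  set b := x ^ ((1:ℝ)/3) with hb
  set c := (x-1) ^ ((1:ℝ)/3) with hc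
  have ha3 : a ^ (3:ℕ) = x + 1 := cube_rpow _ (by linarith)
  have hb3 : b ^ (3:ℕ) = x := cube_rpow _ (by linarith)
  have hc3 : c ^ (3:ℕ) = x - 1 := cube_rpow _ (by linarith)
  have hc1 : 1 ≤ c := by
    calc (1:ℝ) = (1:ℝ) ^ ((1:ℝ)/3) := (Real.one_rpow _).symm
    _ ≤ c := Real.rpow_le_rpow (by norm_num) (by linarith) (by norm_num)
  have hcb : c ≤ b := Real.rpow_le_rpow (by linarith) (by linarith) (by norm_num)
  have hba : b ≤ a := Real.rpow_le_rpow (by linarith) (by linarith) (by norm_num)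
  have hrho : rho r = (1/2) * (a + c - 2*b) := by
    unfold rho
    rw [abs_of_nonneg (show (0:ℝ) ≤ (r:ℝ) + 1 by linarith),
      abs_of_nonneg (show (0:ℝ) ≤ (r:ℝ) - 1 by linarith),
      abs_of_nonneg (show (0:ℝ) ≤ (r:ℝ) by linarith)]
  clear_value a b c
  clear ha hb hc
  have h1 : (a - b) * (a^2 + a*b + b^2) = 1 := by nlinarith [ha3, hb3]
  have h2 : (b - c) * (b^2 + b*c + c^2) = 1 := by nlinarith [hb3, hc3]
  have hD2 : (0:ℝ) < b^2 + b*c + c^2 := by nlinarith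
  have hD12 : b^2 + b*c + c^2 ≤ a^2 + a*b + b^2 := by nlinarith
  have key1 : a - b ≤ b - c := by nlinarith
  have hbc0 : 0 ≤ b - c := by linarith
  have key2 : b - c ≤ 1 / c^2 := by
    rw [le_div_iff₀ (by nlinarith : (0:ℝ) < c^2)]
    nlinarith
  have habs : |rho r| ≤ (1/2) * (1/c^2) := by
    rw [hrho, abs_mul, abs_of_nonneg (by norm_num : (0:ℝ) ≤ (1:ℝ)/2)]
    have h3 : |a + c - 2*b| ≤ b - c := by
      rw [abs_le]
      constructor <;> nlinarith
    have h4 := le_trans h3 key2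
    nlinarith [abs_nonneg (a + c - 2*b)]
  have hc6 : (c^2)^(3:ℕ) = (x-1)^2 := by
    rw [show (c^2)^(3:ℕ) = (c^(3:ℕ))^2 by ring, hc3]
  calc |rho r| ^ (3:ℕ) ≤ ((1/2) * (1/c^2)) ^ (3:ℕ) :=
        pow_le_pow_left₀ (abs_nonneg _) habs 3
    _ = (1/8) * (1 / (c^2)^(3:ℕ)) := by ring
    _ = (1/8) * (1 / (x-1)^2) := by rw [hc6]

lemma basel_shift : HasSum (fun n : ℕ => (1:ℝ) / ((n:ℝ)+1)^2) (π^2/6) := by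
  have h0 : HasSum (fun n : ℕ => (1:ℝ) / (n:ℝ)^2)
      (π^2/6 + ∑ i ∈ Finset.range 1, (1:ℝ)/(i:ℝ)^2) := by
    simpa using hasSum_zeta_two
  have h1 := (hasSum_nat_add_iff (f := fun n : ℕ => (1:ℝ)/(n:ℝ)^2) (g := π^2/6) 1).mpr h0
  simpa [Nat.cast_add] using h1

lemma summable_bound : Summable (fun n : ℕ => (1/8) * ((1:ℝ) / ((n:ℝ)+1)^2)) :=
  (basel_shift.summable).mul_left _

lemma shifted_bound (n : ℕ) : |rho ((n:ℤ) + 2) ^ 3| ≤ (1/8) * ((1:ℝ) / ((n:ℝ)+1)^2) := by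
  have h := rho_cube_bound ((n:ℤ) + 2) (by omega)
  have hcast : (((n:ℤ) + 2 : ℤ):ℝ) - 1 = (n:ℝ) + 1 := by push_cast; ring
  rw [hcast] at h
  rw [abs_pow]
  exact h

lemma summable_nat : Summable (fun n : ℕ => rho (n:ℤ) ^ 3) := by
  rw [← summable_nat_add_iff 2]
  apply Summable.of_abs
  apply Summable.of_nonneg_of_le (fun n => abs_nonneg _) (fun n => ?_) summable_bound
  push_cast
  exact shifted_bound n

theorem stmt_2 :
    Summable (fun r : ℤ => rho r ^ 3) ∧ 0 < 6 * ∑' r : ℤ, rho r ^ 3 := by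
  have h1shift := (summable_nat_add_iff (f := fun n : ℕ => rho (n:ℤ)^3) 1).mpr summable_nat
  have hs1 : Summable (fun n : ℕ => rho ((n:ℤ)+1) ^ 3) :=
    h1shift.congr (fun n => by push_cast; rfl)
  have hneg : ∀ n : ℕ, rho (-((n:ℤ) + 1)) ^ 3 = rho ((n:ℤ) + 1) ^ 3 := fun n => by rw [rho_neg]
  have hsneg : Summable (fun n : ℕ => rho (-((n:ℤ)+1)) ^ 3) := hs1.congr (fun n => (hneg n).symm)
  have hsum : Summable (fun r : ℤ => rho r ^ 3) :=
    Summable.of_nat_of_neg_add_one summable_nat hsneg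
  refine ⟨hsum, ?_⟩
  have hdec : ∑' r : ℤ, rho r ^ 3
      = (∑' n : ℕ, rho (n:ℤ) ^ 3) + ∑' n : ℕ, rho (-((n:ℤ)+1)) ^ 3 :=
    tsum_of_nat_of_neg_add_one summable_nat hsneg
  have hdecneg : (∑' n : ℕ, rho (-((n:ℤ)+1)) ^ 3) = ∑' n : ℕ, rho ((n:ℤ)+1) ^ 3 :=
    tsum_congr hneg
  have hdec2 : (∑' n : ℕ, rho (n:ℤ) ^ 3) = 1 + ∑' n : ℕ, rho ((n:ℤ)+1) ^ 3 := by
    rw [Summable.tsum_eq_zero_add summable_nat]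
    norm_num [rho_zero]
  set S := ∑' n : ℕ, rho ((n:ℤ)+1) ^ 3 with hSdef
  have hsabs : Summable (fun n : ℕ => |rho ((n:ℤ)+1) ^ 3|) := hs1.abs
  have hAbsS : |S| ≤ ∑' n : ℕ, |rho ((n:ℤ)+1) ^ 3| := by
    rw [hSdef]
    have h := norm_tsum_le_tsum_norm (f := fun n : ℕ => rho ((n:ℤ)+1) ^ 3)
      (by simpa only [Real.norm_eq_abs] using hsabs)
    simpa only [Real.norm_eq_abs] using h
  have hs2 : Summable (fun n : ℕ => |rho ((n:ℤ)+2) ^ 3|) :=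
    Summable.of_nonneg_of_le (fun n => abs_nonneg _) shifted_bound summable_bound
  have htail : (∑' n : ℕ, |rho ((n:ℤ)+1) ^ 3|)
      = |rho 1 ^ 3| + ∑' n : ℕ, |rho ((n:ℤ)+2) ^ 3| := by
    rw [Summable.tsum_eq_zero_add hsabs]
    norm_num
    exact tsum_congr fun n => by push_cast; ring_nf
  have htail2 : (∑' n : ℕ, |rho ((n:ℤ)+2) ^ 3|) ≤ (1/8) * (π^2/6) := by
    calc (∑' n : ℕ, |rho ((n:ℤ)+2) ^ 3|)
        ≤ ∑' n : ℕ, (1/8) * ((1:ℝ) / ((n:ℝ)+1)^2) := Summable.tsum_le_tsum shifted_bound hs2 summable_bound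
    _ = (1/8) * (π^2/6) := (basel_shift.mul_left (1/8)).tsum_eq
  have h1cube : |rho 1 ^ 3| ≤ 1/8 := by
    rw [abs_pow]
    calc |rho 1| ^ 3 ≤ (1/2) ^ 3 := pow_le_pow_left₀ (abs_nonneg _) rho_one_abs 3
    _ = 1/8 := by norm_num
  have hfin : |S| ≤ 1/8 + (1/8) * (π^2/6) := by
    calc |S| ≤ ∑' n : ℕ, |rho ((n:ℤ)+1) ^ 3| := hAbsS
    _ = |rho 1 ^ 3| + ∑' n : ℕ, |rho ((n:ℤ)+2) ^ 3| := htail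
    _ ≤ 1/8 + (1/8) * (π^2/6) := add_le_add h1cube htail2
  have hπ := Real.pi_lt_d2
  have hπ3 := Real.pi_gt_three
  rw [hdec, hdecneg, hdec2]
  have habs := abs_le.mp hfin
  nlinarith [habs.1, habs.2]
end

section
/- Let B be a fractional Brownian motion with Hurst parameter 1/6, t_j = j/n, Delta B_j = B(t_j) - B(t_{j-1}). There exists C > 0 such that for all n and all positive integers i, j, |E[B(t_i) Delta B_j]| <= C n^{-1/3} (j^{-2/3} + (|j - i| max 1)^{-2/3}). -/
open Real MeasureTheory

lemma key (a : ℝ) (ha : 1 ≤ a) :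
    0 ≤ a ^ ((1:ℝ)/3) - (a-1) ^ ((1:ℝ)/3) ∧
    a ^ ((1:ℝ)/3) - (a-1) ^ ((1:ℝ)/3) ≤ a ^ (-(2:ℝ)/3) := by
  have ha0 : (0:ℝ) < a := by linarith
  have ha1 : (0:ℝ) ≤ a - 1 := by linarith
  set x := a ^ ((1:ℝ)/3) with hx
  set y := (a-1) ^ ((1:ℝ)/3) with hy
  have hx0 : 0 < x := Real.rpow_pos_of_pos ha0 _
  have hy0 : 0 ≤ y := Real.rpow_nonneg ha1 _
  have hxy : y ≤ x := Real.rpow_le_rpow ha1 (by linarith) (by norm_num)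
  have hx3 : x ^ 3 = a := by
    rw [hx, ← Real.rpow_natCast (a ^ ((1:ℝ)/3)) 3, ← Real.rpow_mul ha0.le]
    norm_num
  have hy3 : y ^ 3 = a - 1 := by
    rw [hy, ← Real.rpow_natCast ((a-1) ^ ((1:ℝ)/3)) 3, ← Real.rpow_mul ha1]
    norm_num
  have hneg : a ^ (-(2:ℝ)/3) = (x^2)⁻¹ := by
    rw [hx, ← Real.rpow_natCast (a ^ ((1:ℝ)/3)) 2, ← Real.rpow_mul ha0.le,
      ← Real.rpow_neg ha0.le]
    norm_num
  refine ⟨by linarith, ?_⟩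
  have h1 : (x - y) * x^2 ≤ 1 := by
    nlinarith [mul_nonneg (mul_nonneg (sub_nonneg.2 hxy) hx0.le) hy0,
      mul_nonneg (sub_nonneg.2 hxy) (sq_nonneg y)]
  rw [hneg, inv_eq_one_div, le_div_iff₀ (by positivity)]
  exact h1

theorem stmt_7 {Ω : Type*} [MeasurableSpace Ω] (P : Measure Ω) [IsProbabilityMeasure P]
    (B : ℝ → Ω → ℝ)
    (hcov : ∀ s t : ℝ, 0 ≤ s → 0 ≤ t →
      ∫ ω, B s ω * B t ω ∂P
        = (1/2) * (t ^ ((1:ℝ)/3) + s ^ ((1:ℝ)/3) - |t - s| ^ ((1:ℝ)/3)))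
    (hint : ∀ s t : ℝ, Integrable (fun ω => B s ω * B t ω) P) :
    ∃ C : ℝ, 0 < C ∧ ∀ n : ℕ, 1 ≤ n → ∀ i j : ℕ, 1 ≤ i → 1 ≤ j →
      |∫ ω, B ((i:ℝ)/n) ω * (B ((j:ℝ)/n) ω - B (((j:ℝ) - 1)/n) ω) ∂P|
        ≤ C * (n:ℝ) ^ (-(1:ℝ)/3)
          * ((j:ℝ) ^ (-(2:ℝ)/3) + (max |(j:ℝ) - (i:ℝ)| 1) ^ (-(2:ℝ)/3)) := by
  refine ⟨1, one_pos, ?_⟩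
  intro n hn i j hi hj
  have hn0 : (0:ℝ) < n := by exact_mod_cast hn
  have hi1 : (1:ℝ) ≤ i := by exact_mod_cast hi
  have hj1 : (1:ℝ) ≤ j := by exact_mod_cast hj
  set ti : ℝ := (i:ℝ)/n with hti
  set tj : ℝ := (j:ℝ)/n with htj
  set tj1 : ℝ := ((j:ℝ)-1)/n with htj1
  have hti0 : 0 ≤ ti := by positivity
  have htj0 : 0 ≤ tj := by positivity
  have htj10 : 0 ≤ tj1 := by
    apply div_nonneg (by linarith) hn0.le
  -- split the integral
  have hfun : (fun ω => B ti ω * (B tj ω - B tj1 ω))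
      = fun ω => B ti ω * B tj ω - B ti ω * B tj1 ω := by
    funext ω; ring
  have hI : ∫ ω, B ti ω * (B tj ω - B tj1 ω) ∂P
      = (1/2) * (tj ^ ((1:ℝ)/3) + ti ^ ((1:ℝ)/3) - |tj - ti| ^ ((1:ℝ)/3))
        - (1/2) * (tj1 ^ ((1:ℝ)/3) + ti ^ ((1:ℝ)/3) - |tj1 - ti| ^ ((1:ℝ)/3)) := by
    rw [hfun, integral_sub (hint ti tj) (hint ti tj1), hcov ti tj hti0 htj0,
      hcov ti tj1 hti0 htj10]
  set N : ℝ := (n:ℝ) ^ ((1:ℝ)/3) with hN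
  have hN0 : 0 < N := Real.rpow_pos_of_pos hn0 _
  set d : ℝ := (j:ℝ) - (i:ℝ) with hd
  -- rpow identities
  have e1 : tj ^ ((1:ℝ)/3) = (j:ℝ) ^ ((1:ℝ)/3) / N := by
    rw [htj, Real.div_rpow (by positivity) hn0.le]
  have e2 : tj1 ^ ((1:ℝ)/3) = ((j:ℝ)-1) ^ ((1:ℝ)/3) / N := by
    rw [htj1, Real.div_rpow (by linarith) hn0.le]
  have e3 : |tj - ti| ^ ((1:ℝ)/3) = |d| ^ ((1:ℝ)/3) / N := by
    have : tj - ti = d / n := by rw [htj, hti, hd]; ring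
    rw [this, abs_div, abs_of_pos hn0, Real.div_rpow (abs_nonneg _) hn0.le]
  have e4 : |tj1 - ti| ^ ((1:ℝ)/3) = |d - 1| ^ ((1:ℝ)/3) / N := by
    have : tj1 - ti = (d - 1) / n := by rw [htj1, hti, hd]; ring
    rw [this, abs_div, abs_of_pos hn0, Real.div_rpow (abs_nonneg _) hn0.le]
  set u : ℝ := (j:ℝ) ^ ((1:ℝ)/3) - ((j:ℝ)-1) ^ ((1:ℝ)/3) with hu
  set v : ℝ := |d| ^ ((1:ℝ)/3) - |d - 1| ^ ((1:ℝ)/3) with hv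
  have hval : ∫ ω, B ti ω * (B tj ω - B tj1 ω) ∂P = (1/2) * (u - v) / N := by
    rw [hI, e1, e2, e3, e4, hu, hv]; field_simp; ring
  -- bounds
  obtain ⟨hu0, huB⟩ := key (j:ℝ) hj1
  rw [← hu] at hu0 huB
  set m : ℝ := max |d| 1 with hm
  have hm0 : 0 < m := lt_of_lt_of_le one_pos (le_max_right _ _)
  have hvB : |v| ≤ m ^ (-(2:ℝ)/3) := by
    have hcase : 1 ≤ d ∨ d ≤ 0 := by
      rcases le_or_gt (j:ℕ) i with h | h
      · right; rw [hd]; have : (j:ℝ) ≤ i := by exact_mod_cast h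
        linarith
      · left; rw [hd]; have : (i:ℝ) + 1 ≤ j := by exact_mod_cast h
        linarith
    rcases hcase with h | h
    · obtain ⟨h0, hB⟩ := key d h
      have ha : |d| = d := abs_of_nonneg (by linarith)
      have hb : |d - 1| = d - 1 := abs_of_nonneg (by linarith)
      have hmd : m = d := by rw [hm, ha]; exact max_eq_left h
      rw [hv, ha, hb, hmd, abs_of_nonneg h0]
      exact hB
    · obtain ⟨h0, hB⟩ := key (1 - d) (by linarith)
      have ha : |d| = -d := abs_of_nonpos h
      have hb : |d - 1| = 1 - d := by rw [abs_of_nonpos (by linarith)]; ring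
      have h1d : (1 - d) - 1 = -d := by ring
      rw [h1d] at h0 hB
      have hmle : m ≤ 1 - d := by
        rw [hm, ha]; exact max_le (by linarith) (by linarith)
      have : (1 - d) ^ (-(2:ℝ)/3) ≤ m ^ (-(2:ℝ)/3) :=
        Real.rpow_le_rpow_of_nonpos hm0 hmle (by norm_num)
      rw [hv, ha, hb, abs_sub_comm, abs_of_nonneg h0]
      linarith
  -- finish
  rw [hval]
  rw [abs_div, abs_of_pos hN0]
  have habs : |(1/2) * (u - v)| ≤ (j:ℝ) ^ (-(2:ℝ)/3) + m ^ (-(2:ℝ)/3) := by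
    have h1 : |u - v| ≤ |u| + |v| := abs_sub _ _
    have h2 : |u| = u := abs_of_nonneg hu0
    rw [abs_mul]
    have : |u - v| ≤ (j:ℝ) ^ (-(2:ℝ)/3) + m ^ (-(2:ℝ)/3) := by
      rw [h2] at h1
      calc |u - v| ≤ u + |v| := h1
        _ ≤ _ := add_le_add huB hvB
    calc |(1:ℝ)/2| * |u - v| ≤ 1 * |u - v| := by
            apply mul_le_mul_of_nonneg_right _ (abs_nonneg _); rw [abs_of_pos]; norm_num; norm_num
      _ = |u - v| := one_mul _
      _ ≤ _ := this
  have hNinv : (n:ℝ) ^ (-(1:ℝ)/3) = N⁻¹ := by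
    rw [hN, ← Real.rpow_neg hn0.le]; norm_num
  rw [one_mul, hNinv, inv_mul_eq_div]
  gcongr
end

section
/- Let B be a fractional Brownian motion with Hurst parameter 1/6, t_j = j/n, beta_j = (B(t_{j-1}) + B(t_j))/2. There exist positive finite constants C_1, C_2 such that for all n and all positive integers i, j, C_1 |t_j - t_i|^{1/3} <= E|beta_j - beta_i|^2 <= C_2 |t_j - t_i|^{1/3}. -/
set_option maxHeartbeats 800000
open Real MeasureTheory

lemma expand_sq {Ω : Type*} [MeasurableSpace Ω] (P : Measure Ω) (B : ℝ → Ω → ℝ)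
    (hint : ∀ s t : ℝ, Integrable (fun ω => B s ω * B t ω) P) (a b c d : ℝ) :
    ∫ ω, ((B a ω + B b ω)/2 - (B c ω + B d ω)/2) ^ 2 ∂P
      = (1/4) * ((∫ ω, B a ω * B a ω ∂P) + (∫ ω, B b ω * B b ω ∂P)
        + (∫ ω, B c ω * B c ω ∂P) + (∫ ω, B d ω * B d ω ∂P)
        + 2 * (∫ ω, B a ω * B b ω ∂P) + 2 * (∫ ω, B c ω * B d ω ∂P)
        - 2 * (∫ ω, B a ω * B c ω ∂P) - 2 * (∫ ω, B a ω * B d ω ∂P)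
        - 2 * (∫ ω, B b ω * B c ω ∂P) - 2 * (∫ ω, B b ω * B d ω ∂P)) := by
  have h1 : (fun ω => ((B a ω + B b ω)/2 - (B c ω + B d ω)/2) ^ 2)
      = fun ω => (1/4 : ℝ) * ((B a ω * B a ω + B b ω * B b ω + B c ω * B c ω + B d ω * B d ω
        + 2 * (B a ω * B b ω) + 2 * (B c ω * B d ω))
        - (2 * (B a ω * B c ω) + 2 * (B a ω * B d ω) + 2 * (B b ω * B c ω) + 2 * (B b ω * B d ω))) := by
    funext ω; ring
  rw [h1, integral_const_mul, integral_sub, integral_add, integral_add, integral_add,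
    integral_add, integral_add, integral_add, integral_add, integral_add, integral_const_mul,
    integral_const_mul, integral_const_mul, integral_const_mul, integral_const_mul,
    integral_const_mul]
  · ring
  all_goals
    repeat' first
      | apply Integrable.add
      | exact (hint _ _).const_mul 2
      | exact hint _ _

theorem stmt_9 {Ω : Type*} [MeasurableSpace Ω] (P : Measure Ω) [IsProbabilityMeasure P]
    (B : ℝ → Ω → ℝ)
    (hcov : ∀ s t : ℝ, 0 ≤ s → 0 ≤ t →
      ∫ ω, B s ω * B t ω ∂P
        = (1/2) * (t ^ ((1:ℝ)/3) + s ^ ((1:ℝ)/3) - |t - s| ^ ((1:ℝ)/3)))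
    (hint : ∀ s t : ℝ, Integrable (fun ω => B s ω * B t ω) P) :
    ∃ C₁ C₂ : ℝ, 0 < C₁ ∧ 0 < C₂ ∧ ∀ n : ℕ, 1 ≤ n → ∀ i j : ℕ, 1 ≤ i → 1 ≤ j →
      C₁ * |(j:ℝ)/n - (i:ℝ)/n| ^ ((1:ℝ)/3)
        ≤ ∫ ω, ((B (((j:ℝ) - 1)/n) ω + B ((j:ℝ)/n) ω)/2
              - (B (((i:ℝ) - 1)/n) ω + B ((i:ℝ)/n) ω)/2) ^ 2 ∂P ∧
      ∫ ω, ((B (((j:ℝ) - 1)/n) ω + B ((j:ℝ)/n) ω)/2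
              - (B (((i:ℝ) - 1)/n) ω + B ((i:ℝ)/n) ω)/2) ^ 2 ∂P
        ≤ C₂ * |(j:ℝ)/n - (i:ℝ)/n| ^ ((1:ℝ)/3) := by
  refine ⟨1/4, 3/2, by norm_num, by norm_num, ?_⟩
  intro n hn i j hi hj
  have hnn : (0:ℝ) < (n:ℝ) := by exact_mod_cast Nat.lt_of_lt_of_le Nat.zero_lt_one hn
  by_cases hij : i = j
  · subst hij
    simp [Real.zero_rpow (by norm_num : ((1:ℝ)/3) ≠ 0)]
  · -- i ≠ j
    have hi1 : (1:ℝ) ≤ (i:ℝ) := by exact_mod_cast hi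
    have hj1 : (1:ℝ) ≤ (j:ℝ) := by exact_mod_cast hj
    set m : ℝ := (j:ℝ) - (i:ℝ) with hm
    have hM : 1 ≤ |m| := by
      have : ((j:ℤ) - (i:ℤ)) ≠ 0 := by
        intro h; apply hij; omega
      have h1 : (1:ℤ) ≤ |(j:ℤ) - (i:ℤ)| := Int.one_le_abs this
      have : ((1:ℤ):ℝ) ≤ (|(j:ℤ) - (i:ℤ)| : ℝ) := by exact_mod_cast h1
      rw [hm]; push_cast at this ⊢; convert this using 2
    have ha : (0:ℝ) ≤ ((j:ℝ) - 1)/(n:ℝ) := div_nonneg (by linarith) hnn.le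
    have hb : (0:ℝ) ≤ (j:ℝ)/(n:ℝ) := div_nonneg (by linarith) hnn.le
    have hc : (0:ℝ) ≤ ((i:ℝ) - 1)/(n:ℝ) := div_nonneg (by linarith) hnn.le
    have hd : (0:ℝ) ≤ (i:ℝ)/(n:ℝ) := div_nonneg (by linarith) hnn.le
    have E_eq := expand_sq P B hint (((j:ℝ) - 1)/(n:ℝ)) ((j:ℝ)/(n:ℝ))
      (((i:ℝ) - 1)/(n:ℝ)) ((i:ℝ)/(n:ℝ))
    rw [hcov _ _ ha ha, hcov _ _ hb hb, hcov _ _ hc hc, hcov _ _ hd hd,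
      hcov _ _ ha hb, hcov _ _ hc hd, hcov _ _ ha hc, hcov _ _ ha hd,
      hcov _ _ hb hc, hcov _ _ hb hd] at E_eq
    have e_ab : (j:ℝ)/(n:ℝ) - ((j:ℝ) - 1)/(n:ℝ) = 1/(n:ℝ) := by ring
    have e_cd : (i:ℝ)/(n:ℝ) - ((i:ℝ) - 1)/(n:ℝ) = 1/(n:ℝ) := by ring
    have e_ac : ((i:ℝ) - 1)/(n:ℝ) - ((j:ℝ) - 1)/(n:ℝ) = -(m/(n:ℝ)) := by rw [hm]; ring
    have e_ad : (i:ℝ)/(n:ℝ) - ((j:ℝ) - 1)/(n:ℝ) = -((m - 1)/(n:ℝ)) := by rw [hm]; ring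
    have e_bc : ((i:ℝ) - 1)/(n:ℝ) - (j:ℝ)/(n:ℝ) = -((m + 1)/(n:ℝ)) := by rw [hm]; ring
    have e_bd : (i:ℝ)/(n:ℝ) - (j:ℝ)/(n:ℝ) = -(m/(n:ℝ)) := by rw [hm]; ring
    rw [e_ab, e_cd, e_ac, e_ad, e_bc, e_bd] at E_eq
    simp only [sub_self, abs_zero, Real.zero_rpow (by norm_num : ((1:ℝ)/3) ≠ 0),
      abs_neg, abs_div, abs_of_pos hnn, abs_one] at E_eq
    have E_eq2 : ∫ ω, ((B (((j:ℝ) - 1)/(n:ℝ)) ω + B ((j:ℝ)/(n:ℝ)) ω)/2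
              - (B (((i:ℝ) - 1)/(n:ℝ)) ω + B ((i:ℝ)/(n:ℝ)) ω)/2) ^ 2 ∂P
        = (1/4) * (2 * (|m|/(n:ℝ)) ^ ((1:ℝ)/3) + (|m - 1|/(n:ℝ)) ^ ((1:ℝ)/3)
            + (|m + 1|/(n:ℝ)) ^ ((1:ℝ)/3) - 2 * ((1:ℝ)/(n:ℝ)) ^ ((1:ℝ)/3)) := by
      rw [E_eq]; ring
    have e_goal : (j:ℝ)/(n:ℝ) - (i:ℝ)/(n:ℝ) = m/(n:ℝ) := by rw [hm]; ring
    rw [e_goal, abs_div, abs_of_pos hnn]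
    set A := (|m|/(n:ℝ)) ^ ((1:ℝ)/3) with hA
    set B1 := (|m - 1|/(n:ℝ)) ^ ((1:ℝ)/3) with hB1
    set B2 := (|m + 1|/(n:ℝ)) ^ ((1:ℝ)/3) with hB2
    set O := ((1:ℝ)/(n:ℝ)) ^ ((1:ℝ)/3) with hO
    have hApos : 0 ≤ A := Real.rpow_nonneg (div_nonneg (abs_nonneg _) hnn.le) _
    have hB1pos : 0 ≤ B1 := Real.rpow_nonneg (div_nonneg (abs_nonneg _) hnn.le) _
    have hB2pos : 0 ≤ B2 := Real.rpow_nonneg (div_nonneg (abs_nonneg _) hnn.le) _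
    have hOpos : 0 ≤ O := Real.rpow_nonneg (div_nonneg (by norm_num) hnn.le) _
    have hOA : O ≤ A := by
      rw [hO, hA]
      gcongr
    have h213 : (2:ℝ) ^ ((1:ℝ)/3) ≤ 2 := by
      calc (2:ℝ) ^ ((1:ℝ)/3) ≤ (2:ℝ) ^ (1:ℝ) :=
            Real.rpow_le_rpow_of_exponent_le (by norm_num) (by norm_num)
        _ = 2 := Real.rpow_one 2
    have key2 : ∀ x : ℝ, |x| ≤ 2 * |m| → (|x|/(n:ℝ)) ^ ((1:ℝ)/3) ≤ 2 * A := by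
      intro x hx
      have h1 : (|x|/(n:ℝ)) ^ ((1:ℝ)/3) ≤ (2 * (|m|/(n:ℝ))) ^ ((1:ℝ)/3) := by
        apply Real.rpow_le_rpow (div_nonneg (abs_nonneg _) hnn.le) ?_ (by norm_num)
        calc |x|/(n:ℝ) ≤ (2 * |m|)/(n:ℝ) := by gcongr
          _ = 2 * (|m|/(n:ℝ)) := mul_div_assoc 2 |m| (n:ℝ)
      have h2 : (2 * (|m|/(n:ℝ))) ^ ((1:ℝ)/3)
          = (2:ℝ) ^ ((1:ℝ)/3) * A := by
        rw [hA, Real.mul_rpow (by norm_num) (div_nonneg (abs_nonneg _) hnn.le)]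
      calc (|x|/(n:ℝ)) ^ ((1:ℝ)/3) ≤ (2:ℝ) ^ ((1:ℝ)/3) * A := h2 ▸ h1
        _ ≤ 2 * A := mul_le_mul_of_nonneg_right h213 hApos
    have hB1A : B1 ≤ 2 * A := key2 (m - 1) (by
      have := abs_sub_abs_le_abs_sub m (1:ℝ)
      have h := abs_sub (m) (1:ℝ)
      calc |m - 1| ≤ |m| + |1| := abs_sub m 1
        _ = |m| + 1 := by rw [abs_one]
        _ ≤ 2 * |m| := by linarith)
    have hB2A : B2 ≤ 2 * A := key2 (m + 1) (by
      calc |m + 1| ≤ |m| + |1| := abs_add_le m 1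
        _ = |m| + 1 := by rw [abs_one]
        _ ≤ 2 * |m| := by linarith)
    -- one of B1, B2 is at least O
    have hOB : O ≤ B1 ∨ O ≤ B2 := by
      have habs : 1 ≤ |m - 1| ∨ 1 ≤ |m + 1| := by
        rcases le_total m 0 with h | h
        · left
          rw [abs_of_nonpos (by linarith : m - 1 ≤ 0)]
          have : |m| = -m := abs_of_nonpos h
          linarith [hM.trans_eq this]
        · right
          rw [abs_of_nonneg (by linarith : (0:ℝ) ≤ m + 1)]
          have : |m| = m := abs_of_nonneg h
          linarith [hM.trans_eq this]
      rcases habs with h | h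
      · left; rw [hO, hB1]
        gcongr
      · right; rw [hO, hB2]
        gcongr
    rw [E_eq2]
    constructor
    · rcases hOB with h | h <;> linarith
    · linarith
end

section
/- Fix t > 0. The sequence a_n := sum over k from 1 to floor(n t) of |(E[B(t_{k-1}) Delta B_k])^3 + 1/(8n)| converges to 0 as n -> infinity, where B is fractional Brownian motion with Hurst parameter 1/6, t_k = k/n and Delta B_k = B(t_k) - B(t_{k-1}). Equivalently, since E[B(t_{k-1}) Delta B_k] = (1/(2 n^{1/3}))(k^{1/3} - (k-1)^{1/3} - 1), the sum over k <= floor(nt) of |(1/(2 n^{1/3}))^3 (k^{1/3}-(k-1)^{1/3}-1)^3 + 1/(8n)| tends to 0. -/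
open Real MeasureTheory Filter

private lemma cube_rpow_third {x : ℝ} (hx : 0 ≤ x) : (x ^ ((1:ℝ)/3)) ^ (3:ℕ) = x := by
  rw [← Real.rpow_natCast (x ^ ((1:ℝ)/3)) 3, ← Real.rpow_mul hx]
  norm_num

private lemma c_le_one (k : ℕ) (hk : 1 ≤ k) :
    (k:ℝ) ^ ((1:ℝ)/3) - ((k:ℝ) - 1) ^ ((1:ℝ)/3) ≤ 1 := by
  have hk1 : (0:ℝ) ≤ (k:ℝ) - 1 := by
    have : (1:ℝ) ≤ (k:ℝ) := by exact_mod_cast hk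
    linarith
  set a := ((k:ℝ) - 1) ^ ((1:ℝ)/3) with ha_def
  have ha : 0 ≤ a := Real.rpow_nonneg hk1 _
  have h3 : a ^ (3:ℕ) = (k:ℝ) - 1 := cube_rpow_third hk1
  have hle : (k:ℝ) ≤ (a + 1) ^ (3:ℕ) := by nlinarith [sq_nonneg a]
  have h1 : (k:ℝ) ^ ((1:ℝ)/3) ≤ ((a + 1) ^ (3:ℕ)) ^ ((1:ℝ)/3) :=
    Real.rpow_le_rpow (Nat.cast_nonneg k) hle (by norm_num)
  have h2 : ((a + 1) ^ (3:ℕ)) ^ ((1:ℝ)/3) = a + 1 := by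
    rw [← Real.rpow_natCast (a + 1) 3, ← Real.rpow_mul (by linarith)]
    norm_num
  linarith [h1, h2.le]

private lemma c_nonneg (k : ℕ) (hk : 1 ≤ k) :
    0 ≤ (k:ℝ) ^ ((1:ℝ)/3) - ((k:ℝ) - 1) ^ ((1:ℝ)/3) := by
  have hk1 : (0:ℝ) ≤ (k:ℝ) - 1 := by
    have : (1:ℝ) ≤ (k:ℝ) := by exact_mod_cast hk
    linarith
  have := Real.rpow_le_rpow hk1 (by linarith : (k:ℝ) - 1 ≤ (k:ℝ)) (by norm_num : (0:ℝ) ≤ 1/3)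
  linarith

private lemma telescope (m : ℕ) :
    ∑ k ∈ Finset.Icc 1 m, ((k:ℝ) ^ ((1:ℝ)/3) - ((k:ℝ) - 1) ^ ((1:ℝ)/3))
      = (m:ℝ) ^ ((1:ℝ)/3) := by
  induction m with
  | zero => simp [Real.zero_rpow (by norm_num : (1:ℝ)/3 ≠ 0)]
  | succ m ih =>
    rw [Finset.sum_Icc_succ_top (Nat.le_add_left 1 m), ih]
    push_cast
    ring_nf

theorem stmt_10 {Ω : Type*} [MeasurableSpace Ω] (P : Measure Ω) [IsProbabilityMeasure P]
    (B : ℝ → Ω → ℝ)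
    (hcov : ∀ s t : ℝ, 0 ≤ s → 0 ≤ t →
      ∫ ω, B s ω * B t ω ∂P
        = (1/2) * (t ^ ((1:ℝ)/3) + s ^ ((1:ℝ)/3) - |t - s| ^ ((1:ℝ)/3)))
    (hint : ∀ s t : ℝ, Integrable (fun ω => B s ω * B t ω) P)
    (t : ℝ) (ht : 0 < t) :
    Tendsto
      (fun n : ℕ => ∑ k ∈ Finset.Icc 1 (Nat.floor ((n:ℝ) * t)),
        |(∫ ω, B (((k:ℝ) - 1)/n) ω * (B ((k:ℝ)/n) ω - B (((k:ℝ) - 1)/n) ω) ∂P) ^ 3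
          + 1/(8 * (n:ℝ))|)
      atTop (nhds 0) := by
  set f : ℕ → ℝ := fun n => ∑ k ∈ Finset.Icc 1 (Nat.floor ((n:ℝ) * t)),
        |(∫ ω, B (((k:ℝ) - 1)/n) ω * (B ((k:ℝ)/n) ω - B (((k:ℝ) - 1)/n) ω) ∂P) ^ 3
          + 1/(8 * (n:ℝ))| with hf
  have hg : Tendsto (fun n : ℕ => 3 * t ^ ((1:ℝ)/3) / 8 * (n:ℝ) ^ (-(2/3) : ℝ))
      atTop (nhds 0) := by
    have h1 : Tendsto (fun n : ℕ => (n:ℝ) ^ (-(2/3) : ℝ)) atTop (nhds 0) :=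
      (tendsto_rpow_neg_atTop (by norm_num : (0:ℝ) < 2/3)).comp tendsto_natCast_atTop_atTop
    simpa using h1.const_mul (3 * t ^ ((1:ℝ)/3) / 8)
  apply squeeze_zero' (g := fun n : ℕ => 3 * t ^ ((1:ℝ)/3) / 8 * (n:ℝ) ^ (-(2/3) : ℝ))
    (Eventually.of_forall fun n => Finset.sum_nonneg fun k _ => abs_nonneg _) _ hg
  filter_upwards [eventually_ge_atTop 1] with n hn
  have hn0 : (0:ℝ) < (n:ℝ) := by exact_mod_cast hn
  have hn13 : (0:ℝ) < (n:ℝ) ^ ((1:ℝ)/3) := Real.rpow_pos_of_pos hn0 _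
  -- per-term computation
  have hterm : ∀ k ∈ Finset.Icc 1 (Nat.floor ((n:ℝ) * t)),
      |(∫ ω, B (((k:ℝ) - 1)/n) ω * (B ((k:ℝ)/n) ω - B (((k:ℝ) - 1)/n) ω) ∂P) ^ 3
          + 1/(8 * (n:ℝ))|
        ≤ 3 / (8 * (n:ℝ)) * ((k:ℝ) ^ ((1:ℝ)/3) - ((k:ℝ) - 1) ^ ((1:ℝ)/3)) := by
    intro k hk
    have hk1 : 1 ≤ k := (Finset.mem_Icc.mp hk).1
    have hk1' : (1:ℝ) ≤ (k:ℝ) := by exact_mod_cast hk1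
    have hs0 : (0:ℝ) ≤ ((k:ℝ) - 1)/n := div_nonneg (by linarith) hn0.le
    have hu0 : (0:ℝ) ≤ (k:ℝ)/n := by positivity
    set c : ℝ := (k:ℝ) ^ ((1:ℝ)/3) - ((k:ℝ) - 1) ^ ((1:ℝ)/3) with hc
    have hc0 : 0 ≤ c := c_nonneg k hk1
    have hc1 : c ≤ 1 := c_le_one k hk1
    have hI : (∫ ω, B (((k:ℝ) - 1)/n) ω * (B ((k:ℝ)/n) ω - B (((k:ℝ) - 1)/n) ω) ∂P)
        = 1 / (2 * (n:ℝ) ^ ((1:ℝ)/3)) * (c - 1) := by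
      have hsplit : (fun ω => B (((k:ℝ) - 1)/n) ω * (B ((k:ℝ)/n) ω - B (((k:ℝ) - 1)/n) ω))
          = fun ω => B (((k:ℝ) - 1)/n) ω * B ((k:ℝ)/n) ω
              - B (((k:ℝ) - 1)/n) ω * B (((k:ℝ) - 1)/n) ω := by
        funext ω; ring
      rw [hsplit, integral_sub (hint _ _) (hint _ _), hcov _ _ hs0 hu0, hcov _ _ hs0 hs0]
      have hdiff : (k:ℝ)/n - ((k:ℝ) - 1)/n = 1/n := by field_simp; ring
      have habs : |(k:ℝ)/n - ((k:ℝ) - 1)/n| = 1/n := by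
        rw [hdiff, abs_of_nonneg (by positivity)]
      have hzero : |((k:ℝ) - 1)/n - ((k:ℝ) - 1)/n| ^ ((1:ℝ)/3) = 0 := by
        simp [Real.zero_rpow (by norm_num : (1:ℝ)/3 ≠ 0)]
      rw [habs, hzero]
      have h1 : ((k:ℝ)/n) ^ ((1:ℝ)/3) = (k:ℝ) ^ ((1:ℝ)/3) / (n:ℝ) ^ ((1:ℝ)/3) :=
        Real.div_rpow (by positivity) hn0.le _
      have h2 : (((k:ℝ) - 1)/n) ^ ((1:ℝ)/3) = ((k:ℝ) - 1) ^ ((1:ℝ)/3) / (n:ℝ) ^ ((1:ℝ)/3) :=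
        Real.div_rpow (by linarith) hn0.le _
      have h3 : ((1:ℝ)/n) ^ ((1:ℝ)/3) = 1 / (n:ℝ) ^ ((1:ℝ)/3) := by
        rw [Real.div_rpow (by norm_num) hn0.le, Real.one_rpow]
      rw [h1, h2, h3]
      field_simp [hc]
      ring_nf
      rw [hc]
      ring_nf
    have hcube : (1 / (2 * (n:ℝ) ^ ((1:ℝ)/3)) * (c - 1)) ^ 3
        = (c - 1) ^ 3 / (8 * (n:ℝ)) := by
      have h8 : ((n:ℝ) ^ ((1:ℝ)/3)) ^ (3:ℕ) = (n:ℝ) := cube_rpow_third hn0.le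
      rw [mul_pow, div_pow, one_pow, mul_pow, h8]
      ring
    rw [hI, hcube]
    have hval : (c - 1) ^ 3 / (8 * (n:ℝ)) + 1/(8 * (n:ℝ))
        = ((c - 1) ^ 3 + 1) / (8 * (n:ℝ)) := by ring
    rw [hval, abs_div, abs_of_nonneg (by nlinarith [mul_nonneg hc0 (by positivity : (0:ℝ) ≤ (2*c - 3)^2 + 3)] : (0:ℝ) ≤ (c - 1) ^ 3 + 1),
      abs_of_nonneg (by positivity : (0:ℝ) ≤ 8 * (n:ℝ))]
    rw [div_le_iff₀ (by positivity : (0:ℝ) < 8 * (n:ℝ))]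
    have : 3 / (8 * (n:ℝ)) * c * (8 * (n:ℝ)) = 3 * c := by field_simp
    rw [this]
    nlinarith [mul_nonneg (sq_nonneg c) (by linarith : (0:ℝ) ≤ 3 - c)]
  calc f n ≤ ∑ k ∈ Finset.Icc 1 (Nat.floor ((n:ℝ) * t)),
        3 / (8 * (n:ℝ)) * ((k:ℝ) ^ ((1:ℝ)/3) - ((k:ℝ) - 1) ^ ((1:ℝ)/3)) :=
      Finset.sum_le_sum hterm
    _ = 3 / (8 * (n:ℝ)) * ((Nat.floor ((n:ℝ) * t) : ℝ) ^ ((1:ℝ)/3)) := by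
      rw [← Finset.mul_sum, telescope]
    _ ≤ 3 / (8 * (n:ℝ)) * (((n:ℝ) * t) ^ ((1:ℝ)/3)) := by
      apply mul_le_mul_of_nonneg_left _ (by positivity)
      exact Real.rpow_le_rpow (by positivity)
        (Nat.floor_le (by positivity)) (by norm_num)
    _ = 3 * t ^ ((1:ℝ)/3) / 8 * (n:ℝ) ^ (-(2/3) : ℝ) := by
      rw [Real.mul_rpow hn0.le ht.le]
      have : (n:ℝ) ^ (-(2/3) : ℝ) = (n:ℝ) ^ ((1:ℝ)/3) / (n:ℝ) := by
        rw [show (-(2/3) : ℝ) = 1/3 - 1 by norm_num, Real.rpow_sub hn0, Real.rpow_one]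
      rw [this]
      ring
end
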